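/- arXiv:2112.03362 — 3 statements merged into one kernel-verified Lean document; each statement's English description precedes it below -/
import Mathlib

section
/- Let p be an odd prime and v ∈ ℤ/p a non-square. The number of pairs (a,b) ∈ (ℤ/p)² satisfying a² - v·b² = 1 is exactly p + 1. -/
/-!
Writing `χ` for the quadratic character of `𝔽_q`, the equation `a ^ 2 = c` has `1 + χ c`
solutions in `a`, so counting by `b` gives `q + ∑ b, χ (1 + v b²) = q + χ v · ∑ b, χ (b² + v⁻¹)`.
For `c ≠ 0` the sum `∑ a, χ (a² - c)` equals `∑ b, (1 + χ b) χ (b - c) = ∑ b, χ (b (b - c))`,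
which the substitution `b = c y` turns into `χ (-1)` times the Jacobi sum `J(χ, χ) = -χ (-1)`.
Hence it is `-1`, and the count is `q - χ v`.
-/

open Finset

section

variable {F : Type*} [Field F] [Fintype F] [DecidableEq F]

local notation "χ" => quadraticChar F

lemma card_filter_sq_eq (hF : ringChar F ≠ 2) (c : F) :
    (#{a : F | a ^ 2 = c} : ℤ) = χ c + 1 := by
  simpa only [Set.toFinset_ofPred] using quadraticChar_card_sqrts hF c

lemma sum_comp_sq (hF : ringChar F ≠ 2) (f : F → ℤ) :
    ∑ a, f (a ^ 2) = ∑ c, (χ c + 1) * f c := by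
  rw [← Finset.sum_fiberwise univ (· ^ 2)]
  refine sum_congr rfl fun c _ => ?_
  rw [← card_filter_sq_eq hF, sum_congr rfl fun a ha => congrArg f (mem_filter.mp ha).2,
    sum_const, nsmul_eq_mul]

lemma quadraticChar_sum_mul_sub_eq_neg_one (hF : ringChar F ≠ 2) {c : F} (hc : c ≠ 0) :
    ∑ b, χ (b * (b - c)) = -1 := by
  have hχ : (χ)⁻¹ = χ := quadraticChar_isQuadratic F |>.inv
  have hJ := jacobiSum_nontrivial_inv (quadraticChar_ne_one hF)
  rw [hχ, jacobiSum] at hJ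
  calc ∑ b, χ (b * (b - c)) = ∑ y, χ (c * y * (c * y - c)) :=
        (Fintype.sum_equiv (Equiv.mulLeft₀ c hc) _ _ fun _ => rfl).symm
    _ = ∑ y, χ (-1) * (χ y * χ (1 - y)) := by
        refine sum_congr rfl fun y _ => ?_
        rw [show c * y * (c * y - c) = c ^ 2 * (-1 * (y * (1 - y))) by ring, map_mul,
          quadraticChar_sq_one' hc, one_mul, map_mul, map_mul]
    _ = -1 := by
        rw [← mul_sum, hJ, mul_neg, ← sq, quadraticChar_sq_one (neg_ne_zero.mpr one_ne_zero)]

lemma quadraticChar_sum_sq_sub_eq_neg_one (hF : ringChar F ≠ 2) {c : F} (hc : c ≠ 0) :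
    ∑ a, χ (a ^ 2 - c) = -1 := by
  have hshift : ∑ b, χ (b - c) = 0 :=
    (Fintype.sum_equiv (Equiv.subRight c) _ χ fun _ => rfl).trans (quadraticChar_sum_zero hF)
  rw [sum_comp_sq hF (fun b => χ (b - c))]
  simp only [add_mul, one_mul, ← map_mul]
  rw [sum_add_distrib, quadraticChar_sum_mul_sub_eq_neg_one hF hc, hshift, add_zero]

lemma card_sq_sub_mul_sq_eq_one (hF : ringChar F ≠ 2) {v : F} (hv : v ≠ 0) :
    (Nat.card {x : F × F // x.1 ^ 2 - v * x.2 ^ 2 = 1} : ℤ) = Fintype.card F - χ v := by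
  have hval : ∀ b : F, v * b ^ 2 + 1 = v * (b ^ 2 - -v⁻¹) := fun b => by
    rw [mul_sub, mul_neg, mul_inv_cancel₀ hv, sub_neg_eq_add]
  calc (Nat.card {x : F × F // x.1 ^ 2 - v * x.2 ^ 2 = 1} : ℤ)
      = ∑ b : F, (#{a : F | a ^ 2 = v * b ^ 2 + 1} : ℤ) := by
        rw [Nat.card_eq_fintype_card, Fintype.card_subtype, card_filter,
          Fintype.sum_prod_type_right]
        simp only [card_filter, Nat.cast_sum, sub_eq_iff_eq_add']
    _ = ∑ b : F, (χ v * χ (b ^ 2 - -v⁻¹) + 1) := by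
        simp only [card_filter_sq_eq hF, hval, map_mul]
    _ = Fintype.card F - χ v := by
        rw [sum_add_distrib, ← mul_sum,
          quadraticChar_sum_sq_sub_eq_neg_one hF (neg_ne_zero.mpr (inv_ne_zero hv))]
        simp only [sum_const, card_univ, nsmul_eq_mul, mul_one]
        ring

end

theorem card_solutions (p : ℕ) [Fact p.Prime] (hp : Odd p)
    (v : ZMod p) (hv : ¬ IsSquare v) :
    Nat.card {x : ZMod p × ZMod p // x.1 ^ 2 - v * x.2 ^ 2 = 1} = p + 1 := by
  have hchar : ringChar (ZMod p) ≠ 2 := by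
    rw [ZMod.ringChar_zmod_n]
    exact hp.ne_two_of_dvd_nat dvd_rfl
  have hv0 : v ≠ 0 := by rintro rfl; exact hv IsSquare.zero
  have hcount := card_sq_sub_mul_sq_eq_one hchar hv0
  rw [quadraticChar_neg_one_iff_not_isSquare.mpr hv, ZMod.card, sub_neg_eq_add] at hcount
  exact_mod_cast hcount
end

section
/- Let p be an odd prime and v ∈ ℤ/p a non-square. Every invertible 3×3 matrix L over ℤ/p with determinant 1 satisfying Lᵀ A L = A, where A = diag(1, -v, 0), has the block form: L₁₃ = L₂₃ = 0, L₃₃ = s with s = ±1, L₂₂ = s·L₁₁, L₁₂ = s·v·L₂₁, and L₁₁² - v·L₂₁² = 1. -/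
open Matrix

theorem block_form (p : ℕ) [Fact p.Prime] (hp : Odd p)
    (v : ZMod p) (hv : ¬ IsSquare v)
    (L : Matrix (Fin 3) (Fin 3) (ZMod p))
    (hL : Lᵀ * Matrix.diagonal ![1, -v, 0] * L = Matrix.diagonal ![1, -v, 0])
    (hdet : L.det = 1) :
    L 0 2 = 0 ∧ L 1 2 = 0 ∧
      ∃ s : ZMod p, (s = 1 ∨ s = -1) ∧ L 2 2 = s ∧ L 1 1 = s * L 0 0 ∧
        L 0 1 = s * v * L 1 0 ∧ (L 0 0) ^ 2 - v * (L 1 0) ^ 2 = 1 := by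
  have hv0 : v ≠ 0 := fun h => hv ⟨0, by rw [h]; ring⟩
  have h := fun i j => congrFun (congrFun hL i) j
  have e00 := h 0 0
  have e01 := h 0 1
  have e11 := h 1 1
  have e22 := h 2 2
  simp [Matrix.mul_apply, Matrix.transpose_apply, Matrix.diagonal,
    Fin.sum_univ_three] at e00 e01 e11 e22
  rw [Matrix.det_fin_three] at hdet
  -- L 1 2 = 0
  have hf : L 1 2 = 0 := by
    by_contra hne
    exact hv ⟨L 0 2 * (L 1 2)⁻¹, by
      field_simp
      linear_combination -e22⟩
  -- L 0 2 = 0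
  have hc : L 0 2 = 0 := by
    have : L 0 2 * L 0 2 = 0 := by linear_combination e22 + (L 1 2 * v) * hf
    exact mul_self_eq_zero.mp this
  rw [hc, hf] at hdet
  have hdi : L 2 2 * (L 0 0 * L 1 1 - L 0 1 * L 1 0) = 1 := by linear_combination hdet
  have hs2 : (L 0 0 * L 1 1 - L 0 1 * L 1 0) ^ 2 = 1 := by
    apply mul_right_cancel₀ hv0
    rw [one_mul]
    linear_combination (L 0 0 * L 0 1 - v * L 1 0 * L 1 1) * e01 -
      (L 0 1 ^ 2 - v * L 1 1 ^ 2 + v) * e00 + v * e00 - e11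
  have hi : L 2 2 = L 0 0 * L 1 1 - L 0 1 * L 1 0 := by
    linear_combination (L 0 0 * L 1 1 - L 0 1 * L 1 0) * hdi - (L 2 2) * hs2
  refine ⟨hc, hf, L 2 2, ?_, rfl, ?_, ?_, by linear_combination e00⟩
  · have hz : (L 2 2 - 1) * (L 2 2 + 1) = 0 := by
      linear_combination hs2 + (L 2 2 + L 0 0 * L 1 1 - L 0 1 * L 1 0) * hi
    rcases mul_eq_zero.mp hz with hz | hz
    · exact Or.inl (by linear_combination hz)
    · exact Or.inr (by linear_combination hz)
  · rw [hi]
    linear_combination (L 1 0) * e01 - (L 1 1) * e00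
  · rw [hi]
    linear_combination ((L 0 0 * L 1 1 - L 0 1 * L 1 0) * L 1 1) * e01 -
      ((L 0 0 * L 1 1 - L 0 1 * L 1 0) * L 1 0) * e11 - (L 0 1) * hs2
end

section
/- Let p be an odd prime and v ∈ ℤ/p a non-square. The set Ĝ_p of 3×3 matrices L over ℤ/p with det L = 1 and Lᵀ A L = A, where A = diag(1, -v, 0), forms a group of order 2p²(p+1). -/
/-! Since `v` is not a square, the form `x² - v y²` is anisotropic. An isometry `L` of
`diag(1, -v, 0)` sends `e₃` to an isotropic vector, so its third column is `(0, 0, s)`, and its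
upper-left block is an isometry of `x² - v y²`; this forces
`L = [[a, s v c, 0], [c, s a, 0], [e, f, s]]` with `a² - v c² = 1`, `s² = 1` and `e, f` arbitrary.
Stereographic projection puts the conic `a² - v c² = 1` in bijection with `𝔽_q ∪ {∞}`, whence
`2 q² (q + 1)` elements. Over a finite field a non-square exists only in odd characteristic. -/

open Matrix

/-- The group `Ĝ_p` of solutions mod `p` of the defining equations of `SO(3)_p`. -/
abbrev Ghat (p : ℕ) (v : ZMod p) : Type :=
  {L : Matrix (Fin 3) (Fin 3) (ZMod p) //
    Lᵀ * Matrix.diagonal ![1, -v, 0] * L = Matrix.diagonal ![1, -v, 0] ∧ L.det = 1}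

namespace Matrix

variable {n R : Type*} [Fintype n] [DecidableEq n] [CommRing R]

theorem transpose_mul_mul_eq_of_mul_eq_one {A L K : Matrix n n R} (hL : Lᵀ * A * L = A)
    (hLK : L * K = 1) : Kᵀ * A * K = A :=
  calc Kᵀ * A * K = Kᵀ * (Lᵀ * A * L) * K := by rw [hL]
    _ = (L * K)ᵀ * A * (L * K) := by simp only [transpose_mul, Matrix.mul_assoc]
    _ = A := by rw [hLK, transpose_one, Matrix.one_mul, Matrix.mul_one]

def specialIsometryGroup (A : Matrix n n R) : Subgroup (SpecialLinearGroup n R) where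
  carrier := {L | (L : Matrix n n R)ᵀ * A * L = A}
  one_mem' := by simp
  mul_mem' {L M} hL hM := by
    calc ((L * M : SpecialLinearGroup n R) : Matrix n n R)ᵀ * A * (L * M : SpecialLinearGroup n R)
        = (M : Matrix n n R)ᵀ * ((L : Matrix n n R)ᵀ * A * L) * M := by
          simp only [SpecialLinearGroup.coe_mul, transpose_mul, Matrix.mul_assoc]
      _ = A := by rw [hL, hM]
  inv_mem' {L} hL := transpose_mul_mul_eq_of_mul_eq_one hL <| by
    rw [← SpecialLinearGroup.coe_mul, mul_inv_cancel, SpecialLinearGroup.coe_one]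

def specialIsometryGroupEquiv (A : Matrix n n R) :
    {L : Matrix n n R // Lᵀ * A * L = A ∧ L.det = 1} ≃ specialIsometryGroup A where
  toFun L := ⟨⟨L.1, L.2.2⟩, L.2.1⟩
  invFun L := ⟨L.1, L.2, L.1.2⟩

end Matrix

theorem ne_zero_of_not_isSquare {M₀ : Type*} [MonoidWithZero M₀] {a : M₀} (ha : ¬ IsSquare a) :
    a ≠ 0 := by
  rintro rfl
  exact ha IsSquare.zero

theorem card_setOf_sq_eq_one {R : Type*} [Ring R] [NoZeroDivisors R] [Nontrivial R]
    (hR : ringChar R ≠ 2) : Nat.card {s : R | s ^ 2 = 1} = 2 := by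
  have : {s : R | s ^ 2 = 1} = {1, -1} := Set.ext fun _ => sq_eq_one_iff
  rw [this, Nat.card_coe_set_eq, Set.ncard_pair (Ring.neg_one_ne_one_of_char_ne_two hR).symm]

section NormForm

variable {F : Type*} [Field F] {v : F}

theorem sq_sub_mul_sq_eq_zero_iff (hv : ¬ IsSquare v) {x y : F} :
    x ^ 2 - v * y ^ 2 = 0 ↔ x = 0 ∧ y = 0 := by
  refine ⟨fun h => ?_, fun ⟨hx, hy⟩ => by simp [hx, hy]⟩
  by_cases hy : y = 0
  · subst hy
    exact ⟨pow_eq_zero_iff two_ne_zero |>.mp (by simpa using h), rfl⟩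
  · exact absurd ⟨x / y, by field_simp; linear_combination -h⟩ hv

theorem one_sub_mul_sq_ne_zero (hv : ¬ IsSquare v) (t : F) : 1 - v * t ^ 2 ≠ 0 := fun h =>
  one_ne_zero ((sq_sub_mul_sq_eq_zero_iff hv).1 (by simpa using h)).1

theorem ringChar_ne_two_of_not_isSquare [Finite F] (hv : ¬ IsSquare v) : ringChar F ≠ 2 :=
  fun h => hv (FiniteField.isSquare_of_char_two h v)

def unitConic (v : F) : Set (F × F) := {x | x.1 ^ 2 - v * x.2 ^ 2 = 1}

open Classical in
/-- Stereographic projection from the point `(-1, 0)`. -/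
noncomputable def unitConicEquivOption (hF : ringChar F ≠ 2) (hv : ¬ IsSquare v) :
    unitConic v ≃ Option F where
  toFun x := if x.1.1 = -1 then none else some (x.1.2 / (x.1.1 + 1))
  invFun
    | none => ⟨(-1, 0), by simp [unitConic]⟩
    | some t => ⟨((1 + v * t ^ 2) / (1 - v * t ^ 2), 2 * t / (1 - v * t ^ 2)), by
        have := one_sub_mul_sq_ne_zero hv t
        simp only [unitConic, Set.mem_ofPred_eq]
        field_simp
        ring⟩
  left_inv := by
    rintro ⟨⟨a, c⟩, hac⟩
    simp only [unitConic, Set.mem_ofPred_eq] at hac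
    by_cases ha : a = -1
    · subst ha
      have hc : c = 0 := by
        have : v * c ^ 2 = 0 := by linear_combination -hac
        simpa [ne_zero_of_not_isSquare hv] using this
      simp [hc]
    · have ha' : a + 1 ≠ 0 := fun h => ha (eq_neg_of_add_eq_zero_left h)
      have h2 := Ring.two_ne_zero hF
      have hden : 1 - v * (c / (a + 1)) ^ 2 = 2 / (a + 1) := by
        field_simp
        linear_combination hac
      simp only [ha, if_false, hden]
      refine Subtype.ext (Prod.ext ?_ ?_)
      · field_simp
        linear_combination -hac
      · field_simp
  right_inv := by
    rintro (_ | t)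
    · simp
    · have hden := one_sub_mul_sq_ne_zero hv t
      have h2 := Ring.two_ne_zero hF
      have hne : (1 + v * t ^ 2) / (1 - v * t ^ 2) ≠ -1 := by
        rw [Ne, div_eq_iff hden]
        intro h
        exact h2 (by linear_combination h)
      have hsum : (1 + v * t ^ 2) / (1 - v * t ^ 2) + 1 = 2 / (1 - v * t ^ 2) := by
        field_simp
        ring
      simp only [hne, if_false, Option.some.injEq, hsum]
      rw [div_div_div_cancel_right₀ hden, mul_div_cancel_left₀ t h2]

theorem card_unitConic [Finite F] (hv : ¬ IsSquare v) :
    Nat.card (unitConic v) = Nat.card F + 1 := by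
  rw [Nat.card_congr (unitConicEquivOption (ringChar_ne_two_of_not_isSquare hv) hv),
    Finite.card_option]

def normFormIsometry (v a c s e f : F) : Matrix (Fin 3) (Fin 3) F :=
  !![a, s * v * c, 0; c, s * a, 0; e, f, s]

theorem normFormIsometry_mem {a c s e f : F} (hac : (a, c) ∈ unitConic v) (hs : s ^ 2 = 1) :
    (normFormIsometry v a c s e f)ᵀ * diagonal ![1, -v, 0] * normFormIsometry v a c s e f =
      diagonal ![1, -v, 0] ∧ (normFormIsometry v a c s e f).det = 1 := by
  simp only [unitConic, Set.mem_ofPred_eq] at hac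
  constructor
  · ext i j
    fin_cases i <;> fin_cases j <;>
      simp [normFormIsometry, mul_apply, Fin.sum_univ_three, diagonal_apply] <;>
      first
        | ring1
        | linear_combination hac
        | linear_combination (v ^ 2 * c ^ 2 - v * a ^ 2) * hs - v * hac
  · rw [det_fin_three]
    simp [normFormIsometry]
    linear_combination s ^ 2 * hac + hs

theorem transpose_mul_diagonal_mul_apply (L : Matrix (Fin 3) (Fin 3) F) (i j : Fin 3) :
    (Lᵀ * diagonal ![1, -v, 0] * L) i j = L 0 i * L 0 j - v * (L 1 i * L 1 j) := by
  simp [mul_apply, Fin.sum_univ_three]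
  ring

theorem eq_normFormIsometry (hv : ¬ IsSquare v) {L : Matrix (Fin 3) (Fin 3) F}
    (hL : Lᵀ * diagonal ![1, -v, 0] * L = diagonal ![1, -v, 0]) (hdet : L.det = 1) :
    L = normFormIsometry v (L 0 0) (L 1 0) (L 2 2) (L 2 0) (L 2 1) ∧
      (L 0 0, L 1 0) ∈ unitConic v ∧ L 2 2 ^ 2 = 1 := by
  have entry (i j : Fin 3) := transpose_mul_diagonal_mul_apply (v := v) L i j
  rw [hL] at entry
  have E00 : L 0 0 * L 0 0 - v * (L 1 0 * L 1 0) = 1 := by simpa using (entry 0 0).symm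
  have E01 : L 0 0 * L 0 1 - v * (L 1 0 * L 1 1) = 0 := by simpa using (entry 0 1).symm
  have E11 : L 0 1 * L 0 1 - v * (L 1 1 * L 1 1) = -v := by simpa using (entry 1 1).symm
  have E22 : L 0 2 ^ 2 - v * L 1 2 ^ 2 = 0 := by
    simpa [sq] using (entry 2 2).symm
  obtain ⟨h02, h12⟩ := (sq_sub_mul_sq_eq_zero_iff hv).1 E22
  set s := L 0 0 * L 1 1 - L 0 1 * L 1 0
  have hdet' : L 2 2 * s = 1 := by
    rw [det_fin_three, h02, h12] at hdet
    linear_combination hdet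
  have h11 : L 1 1 = s * L 0 0 := by linear_combination (-L 1 1) * E00 + L 1 0 * E01
  have h01 : L 0 1 = s * v * L 1 0 := by linear_combination (-L 0 1) * E00 + L 0 0 * E01
  have hs : s ^ 2 = 1 := by
    refine mul_left_cancel₀ (ne_zero_of_not_isSquare hv) ?_
    linear_combination (-1) * E11 + (L 0 1 + s * v * L 1 0) * h01 -
      v * (L 1 1 + s * L 0 0) * h11 - v * s ^ 2 * E00
  have h22 : L 2 2 = s := by linear_combination s * hdet' - L 2 2 * hs
  refine ⟨?_, by simpa [unitConic, sq] using E00, h22 ▸ hs⟩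
  ext i j
  fin_cases i <;> fin_cases j <;> simp [normFormIsometry, h02, h12, h01, h11, h22]

noncomputable def specialIsometryGroupEquivProd (hv : ¬ IsSquare v) :
    specialIsometryGroup (diagonal ![1, -v, 0]) ≃ unitConic v × {s : F | s ^ 2 = 1} × F × F where
  toFun L :=
    have hL := eq_normFormIsometry hv L.2 L.1.2
    (⟨(L.1.1 0 0, L.1.1 1 0), hL.2.1⟩, ⟨L.1.1 2 2, hL.2.2⟩, L.1.1 2 0, L.1.1 2 1)
  invFun x :=
    have hx := normFormIsometry_mem (e := x.2.2.1) (f := x.2.2.2) x.1.2 x.2.1.2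
    ⟨⟨normFormIsometry v x.1.1.1 x.1.1.2 x.2.1 x.2.2.1 x.2.2.2, hx.2⟩, hx.1⟩
  left_inv L := Subtype.ext <| Subtype.ext (eq_normFormIsometry hv L.2 L.1.2).1.symm
  right_inv _ := rfl

theorem card_specialIsometryGroup [Finite F] (hv : ¬ IsSquare v) :
    Nat.card (specialIsometryGroup (diagonal ![1, -v, 0])) =
      2 * Nat.card F ^ 2 * (Nat.card F + 1) := by
  rw [Nat.card_congr (specialIsometryGroupEquivProd hv), Nat.card_prod, Nat.card_prod,
    Nat.card_prod, card_unitConic hv, card_setOf_sq_eq_one (ringChar_ne_two_of_not_isSquare hv)]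
  ring

end NormForm

theorem Ghat_group_card_general (p : ℕ) [Fact p.Prime]
    (v : ZMod p) (hv : ¬ IsSquare v) :
    ∃ _ : Group (Ghat p v),
      (∀ x y : Ghat p v, (x * y).val = x.val * y.val) ∧
      Nat.card (Ghat p v) = 2 * p ^ 2 * (p + 1) := by
  let e := specialIsometryGroupEquiv (diagonal ![1, -v, 0])
  refine ⟨e.group, fun _ _ => rfl, ?_⟩
  rw [Nat.card_congr e, card_specialIsometryGroup hv, Nat.card_zmod]

theorem Ghat_group_card (p : ℕ) [Fact p.Prime] (hp : Odd p)
    (v : ZMod p) (hv : ¬ IsSquare v) :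
    ∃ _ : Group (Ghat p v),
      (∀ x y : Ghat p v, (x * y).val = x.val * y.val) ∧
      Nat.card (Ghat p v) = 2 * p ^ 2 * (p + 1) :=
  Ghat_group_card_general p v hv
end
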